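/- Let M be a 4-connected binary matroid with at least 6 elements and ground set S, let X be a nonempty independent set in M, and let M^X be the Γ-extension of M with ground set S ∪ Γ. Then M^X has no circuit C with |C| ≤ 3 such that C contains exactly one element of S; in particular, no set of the form {x, γ_i, γ_j} with x ∈ S and γ_i, γ_j ∈ Γ is a circuit of M^X. -/

import Mathlib

open Set
open scoped Classical

/-- A circuit of a matroid: a minimal dependent set. -/
def MatroidCircuit {α : Type*} (M : Matroid α) (C : Set α) : Prop :=
  M.Dep C ∧ ∀ D ⊂ C, ¬ M.Dep D

/-- A cocircuit of a matroid: a circuit of the dual matroid. -/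
def MatroidCocircuit {α : Type*} (M : Matroid α) (C : Set α) : Prop :=
  MatroidCircuit M✶ C

/-- The rank of a set in a matroid, as an extended natural number: the supremum of the
cardinalities of independent subsets of the set. -/
noncomputable def matroidERk {α : Type*} (M : Matroid α) (A : Set α) : ℕ∞ :=
  ⨆ I : {I : Set α // M.Indep I ∧ I ⊆ A}, (I : Set α).encard

/-- The rank of a matroid. -/
noncomputable def matroidERank {α : Type*} (M : Matroid α) : ℕ∞ :=
  matroidERk M M.E

/-- Deletion of a set from a matroid: the restriction to the complement. -/
def matroidDelete {α : Type*} (M : Matroid α) (Y : Set α) : Matroid α :=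
  M.restrict (M.E \ Y)

/-- A `k`-separation of a matroid `M`: a partition of the ground set into disjoint sets `A`, `B`
with `min (|A|, |B|) ≥ k` and `r(A) + r(B) - r(M) ≤ k - 1`. -/
def KSeparation {α : Type*} (M : Matroid α) (k : ℕ) (A B : Set α) : Prop :=
  Disjoint A B ∧ A ∪ B = M.E ∧ (k : ℕ∞) ≤ A.encard ∧ (k : ℕ∞) ≤ B.encard ∧
    matroidERk M A + matroidERk M B ≤ matroidERank M + ((k : ℕ∞) - 1)

/-- For `k ≥ 2`, a matroid is `k`-connected if it has no `(k-1)`-separation. -/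
def KConnected {α : Type*} (M : Matroid α) (k : ℕ) : Prop :=
  ∀ A B : Set α, ¬ KSeparation M (k - 1) A B

/-- The relation `e ~ f` iff `e = f` or some circuit contains both `e` and `f`. -/
def ConnRel {α : Type*} (M : Matroid α) (e f : α) : Prop :=
  e = f ∨ ∃ C, MatroidCircuit M C ∧ e ∈ C ∧ f ∈ C

/-- A component of a matroid: an equivalence class of the relation `ConnRel` on the
ground set. -/
def MatroidComponent {α : Type*} (M : Matroid α) (D : Set α) : Prop :=
  ∃ e ∈ M.E, D = {f ∈ M.E | ConnRel M e f}

/-- A matroid is connected if it has exactly one component. -/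
def MatroidConnected {α : Type*} (M : Matroid α) : Prop :=
  ∃! D : Set α, MatroidComponent M D

/-- `M` is the vector matroid over GF(2) of the matrix with column set `S` whose column at
`e ∈ S` is `A e`: a set is independent iff it is a subset of `S` whose columns are linearly
independent over GF(2). -/
def IsBinaryRep {α ρ : Type*} (M : Matroid α) (S : Set α) (A : α → ρ → ZMod 2) : Prop :=
  M.E = S ∧ ∀ I : Set α, M.Indep I ↔ I ⊆ S ∧ LinearIndependent (ZMod 2) (fun e : I => A e.1)

/-- The columns of the matrix `A^X` of the Γ-extension: for each index `i`, the new column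
labelled `g i` agrees with the column of `x i` in the old rows and has entry `1` in the new
row (indexed by `none`), while every old column keeps its entries in the old rows and has
entry `0` in the new row. -/
noncomputable def gammaCols {α ρ ι : Type*} (A : α → ρ → ZMod 2) (x g : ι → α) :
    α → Option ρ → ZMod 2 := fun e o =>
  if h : ∃ i, g i = e then o.elim 1 (fun r => A (x h.choose) r)
  else o.elim 0 (fun r => A e r)

/-
In `M^X` the new row forces every circuit to contain an even number of elements of `Γ`, so a
circuit `C` with `|C| ≤ 3` and `C ∩ S = {e}` is either `{e}` or `{e, γ_i, γ_j}`. Restricting its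
zero column sum to the old rows gives `A e = 0` or `A e + A x_i + A x_j = 0`, i.e. a dependent
set of at most three elements of `M` (possibly fewer, after cancelling repeated columns in
characteristic two). A `4`-connected matroid on at least six elements has no such set: a
dependent set of size `3` together with its complement would be a `3`-separation.
-/

theorem matroidERk_eq_eRk {α : Type*} (M : Matroid α) (X : Set α) :
    matroidERk M X = M.eRk X := by
  refine le_antisymm (iSup_le fun I => ?_) ?_
  · rw [← I.2.1.eRk_eq_encard]
    exact M.eRk_mono I.2.2
  · obtain ⟨I, hI⟩ := M.exists_isBasis' X
    rw [← hI.encard_eq_eRk]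
    exact le_iSup_of_le (⟨I, hI.indep, hI.subset⟩ : {I // M.Indep I ∧ I ⊆ X}) le_rfl

theorem matroidERank_eq_eRank {α : Type*} (M : Matroid α) : matroidERank M = M.eRank := by
  rw [matroidERank, matroidERk_eq_eRk, Matroid.eRank_def]

theorem KConnected.indep_of_encard_le {α : Type*} {M : Matroid α} {k : ℕ}
    (hM : KConnected M (k + 1)) (hE : 2 * (k : ℕ∞) ≤ M.E.encard) {T : Set α}
    (hTE : T ⊆ M.E) (hT : T.encard ≤ k) : M.Indep T := by
  by_contra hTind
  obtain ⟨D, hTD, hDE, hDk⟩ := Set.exists_superset_subset_encard_eq hTE hT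
    (le_trans (by rw [two_mul]; exact le_add_self) hE)
  have hDdep : M.Dep D := ((Matroid.not_indep_iff hTE).1 hTind).superset hTD hDE
  have hrkD : M.eRk D ≤ k - 1 := ENat.le_sub_one_of_lt
    (hDk ▸ Matroid.eRk_lt_encard_of_dep_of_finite (Set.finite_of_encard_eq_coe hDk) hDdep)
  have hcompl : (k : ℕ∞) ≤ (M.E \ D).encard := by
    have hsplit := Set.encard_sdiff_add_encard_of_subset hDE
    rw [hDk] at hsplit
    refine (ENat.add_le_add_iff_right (ENat.natCast_ne_top k)).1 ?_
    rwa [hsplit, ← two_mul]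
  refine hM D (M.E \ D) ⟨disjoint_sdiff_right, union_sdiff_cancel hDE, hDk.ge, hcompl, ?_⟩
  rw [matroidERk_eq_eRk, matroidERk_eq_eRk, matroidERank_eq_eRank, add_comm M.eRank]
  exact add_le_add hrkD (M.eRk_le_eRank _)

namespace IsBinaryRep

variable {α ρ : Type*} {M : Matroid α} {S : Set α} {A : α → ρ → ZMod 2}

theorem sum_ne_zero_of_indep (hM : IsBinaryRep M S A) {T : Finset α} (hT : M.Indep ↑T)
    (hne : T.Nonempty) : ∑ a ∈ T, A a ≠ 0 := by
  intro hsum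
  have hli := Fintype.linearIndependent_iff.1 ((hM.2 _).1 hT).2 1
    (by simpa [Finset.sum_attach T A] using hsum)
  obtain ⟨a, ha⟩ := hne
  exact one_ne_zero (hli ⟨a, ha⟩)

theorem exists_finset_sum_eq_zero_of_circuit (hM : IsBinaryRep M S A) {C : Set α}
    (hC : MatroidCircuit M C) : ∃ F : Finset α, ↑F = C ∧ ∑ a ∈ F, A a = 0 := by
  obtain ⟨f, hfC, hf, hf0⟩ :=
    linearDepOn_iff.1 fun hli => hC.1.1 ((hM.2 C).2 ⟨hM.1 ▸ hC.1.2, hli⟩)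
  have hone : ∀ a ∈ f.support, f a = 1 := fun a ha =>
    (by decide : ∀ z : ZMod 2, z ≠ 0 → z = 1) _ (Finsupp.mem_support_iff.1 ha)
  have hsum : ∑ a ∈ f.support, A a = 0 := by
    rw [← hf]
    exact Finset.sum_congr rfl fun a ha => by rw [hone a ha, one_smul]
  refine ⟨f.support, ?_, hsum⟩
  by_contra hne
  have hsub : (↑f.support : Set α) ⊂ C := ((Finsupp.mem_supported _ _).1 hfC).ssubset_of_ne hne
  exact hC.2 _ hsub ⟨fun hI => hM.sum_ne_zero_of_indep hI (Finsupp.support_nonempty_iff.2 hf0)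
    hsum, hsub.subset.trans hC.1.2⟩

theorem add_add_ne_zero (hM : IsBinaryRep M S A) (hM3 : ∀ T ⊆ S, T.encard ≤ 3 → M.Indep T)
    {a b c : α} (ha : a ∈ S) (hb : b ∈ S) (hc : c ∈ S) : A a + A b + A c ≠ 0 := by
  have hsmall : ∀ T : Finset α, ↑T ⊆ S → T.card ≤ 3 → T.Nonempty → ∑ t ∈ T, A t ≠ 0 :=
    fun T hTS hT hne => hM.sum_ne_zero_of_indep
      (hM3 _ hTS (by rw [Set.encard_coe_eq_coe_finsetCard]; exact_mod_cast hT)) hne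
  have hcancel : ∀ v : ρ → ZMod 2, v + v = 0 := fun v =>
    funext fun r => CharTwo.add_self_eq_zero (v r)
  by_cases hab : a = b
  · subst hab
    simpa [hcancel] using hsmall {c} (by simpa) (by simp) (by simp)
  by_cases hac : a = c
  · subst hac
    rw [add_right_comm, hcancel, zero_add]
    simpa using hsmall {b} (by simpa) (by simp) (by simp)
  by_cases hbc : b = c
  · subst hbc
    rw [add_assoc, hcancel, add_zero]
    simpa using hsmall {a} (by simpa) (by simp) (by simp)
  simpa [Finset.sum_insert, hab, hac, hbc, add_assoc] using
    hsmall {a, b, c} (by simp [Set.insert_subset_iff, ha, hb, hc]) Finset.card_le_three (by simp)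

end IsBinaryRep

section GammaExtension

variable {α ρ ι : Type*} {M MX : Matroid α} {S : Set α} {A : α → ρ → ZMod 2} {x g : ι → α}

theorem gammaCols_of_notMem_range {a : α} (ha : a ∉ Set.range g) :
    gammaCols A x g a = fun o : Option ρ => o.elim 0 (A a) := by
  funext o
  exact dif_neg ha

theorem gammaCols_apply_self (hg : Function.Injective g) (i : ι) :
    gammaCols A x g (g i) = fun o : Option ρ => o.elim 1 (A (x i)) := by
  have h : ∃ j, g j = g i := ⟨i, rfl⟩
  funext o
  simp only [gammaCols, dif_pos h, hg h.choose_spec]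

theorem inter_ne_singleton_of_circuit_gammaCols (hg : Function.Injective g)
    (hxS : Set.range x ⊆ S) (hdisj : Disjoint S (Set.range g)) (hM : IsBinaryRep M S A)
    (hMX : IsBinaryRep MX (S ∪ Set.range g) (gammaCols A x g))
    (hM3 : ∀ T ⊆ S, T.encard ≤ 3 → M.Indep T) {C : Set α} (hC : MatroidCircuit MX C)
    (hC3 : C.encard ≤ 3) (e : α) : C ∩ S ≠ {e} := by
  intro he
  obtain ⟨F, rfl, hsum⟩ := hMX.exists_finset_sum_eq_zero_of_circuit hC
  obtain ⟨heF, heS⟩ : e ∈ F ∧ e ∈ S := by simpa using he.ge (mem_singleton e)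
  have hΓ : ∀ a ∈ F.erase e, ∃ i, g i = a := by
    intro a ha
    obtain ⟨hae, haF⟩ := Finset.mem_erase.1 ha
    refine ((hMX.1 ▸ hC.1.2 : ↑F ⊆ S ∪ range g) haF).resolve_left fun haS => hae ?_
    simpa using he.le ⟨haF, haS⟩
  have hcard : (F.erase e).card ≤ 2 := by
    rw [Set.encard_coe_eq_coe_finsetCard] at hC3
    have := Finset.card_erase_of_mem heF
    norm_cast at hC3
    omega
  rw [← Finset.insert_erase heF, Finset.sum_insert (Finset.notMem_erase e F),
    gammaCols_of_notMem_range (disjoint_left.1 hdisj heS)] at hsum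
  have heven : 2 ∣ (F.erase e).card := by
    have hnone : ∀ a ∈ F.erase e, gammaCols A x g a none = 1 := by
      intro a ha
      obtain ⟨i, rfl⟩ := hΓ a ha
      rw [gammaCols_apply_self hg]
      rfl
    have := congrFun hsum none
    simp only [Pi.add_apply, Finset.sum_apply, Finset.sum_congr rfl hnone] at this
    simpa [ZMod.natCast_eq_zero_iff] using this
  obtain hG | hG : (F.erase e).card = 0 ∨ (F.erase e).card = 2 := by omega
  · rw [Finset.card_eq_zero.1 hG, Finset.sum_empty, add_zero] at hsum
    have hAe : A e = 0 := funext fun r => congrFun hsum (some r)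
    exact hM.add_add_ne_zero hM3 heS heS heS (by simp [hAe])
  · obtain ⟨a, b, hab, hG⟩ := Finset.card_eq_two.1 hG
    obtain ⟨i, rfl⟩ := hΓ a (by simp [hG])
    obtain ⟨j, rfl⟩ := hΓ b (by simp [hG])
    rw [hG, Finset.sum_pair hab, gammaCols_apply_self hg, gammaCols_apply_self hg] at hsum
    refine hM.add_add_ne_zero hM3 heS (hxS ⟨i, rfl⟩) (hxS ⟨j, rfl⟩) (funext fun r => ?_)
    simpa [add_assoc] using congrFun hsum (some r)

end GammaExtension

theorem stmt_16_general {α ρ ι : Type*}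
    (M MX : Matroid α) (S : Set α) (A : α → ρ → ZMod 2) (x g : ι → α)
    (hginj : Function.Injective g)
    (hxS : Set.range x ⊆ S) (hdisj : Disjoint S (Set.range g))
    (hM : IsBinaryRep M S A)
    (hMX : IsBinaryRep MX (S ∪ Set.range g) (gammaCols A x g))
    (hMconn : KConnected M 4) (hcard : (6 : ℕ∞) ≤ S.encard) :
    (∀ C : Set α, MatroidCircuit MX C → C.encard ≤ 3 → ¬ ∃ e : α, C ∩ S = {e}) ∧
      (∀ e ∈ S, ∀ i j : ι, ¬ MatroidCircuit MX {e, g i, g j}) := by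
  have hM3 : ∀ T ⊆ S, T.encard ≤ 3 → M.Indep T := fun T hTS hT =>
    KConnected.indep_of_encard_le (k := 3) hMconn
      (by rw [hM.1]; exact le_of_eq_of_le (by norm_num) hcard) (hM.1 ▸ hTS) hT
  have hsmall : ∀ C : Set α, MatroidCircuit MX C → C.encard ≤ 3 → ¬ ∃ e : α, C ∩ S = {e} :=
    fun C hC hC3 ⟨e, he⟩ =>
      inter_ne_singleton_of_circuit_gammaCols hginj hxS hdisj hM hMX hM3 hC hC3 e he
  refine ⟨hsmall, fun e he i j hC => hsmall _ hC ?_ ⟨e, ?_⟩⟩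
  · simpa using (Set.encard_coe_eq_coe_finsetCard {e, g i, g j}).trans_le
      (Nat.cast_le.2 Finset.card_le_three)
  · have hgS : ∀ k, g k ∉ S := fun k => disjoint_right.1 hdisj ⟨k, rfl⟩
    ext z
    simp only [mem_inter_iff, mem_insert_iff, mem_singleton_iff]
    constructor
    · rintro ⟨rfl | rfl | rfl, hzS⟩
      exacts [rfl, (hgS i hzS).elim, (hgS j hzS).elim]
    · rintro rfl
      exact ⟨Or.inl rfl, he⟩

/-- If `M` is a `4`-connected binary matroid with at least `6` elements, then the
Γ-extension `M^X` has no circuit `C` with `|C| ≤ 3` containing exactly one element of `S`;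
in particular, no set `{e, g i, g j}` with `e ∈ S` is a circuit of `M^X`. -/
theorem stmt_16 {α ρ ι : Type*} [Fintype ι] [Nonempty ι]
    (M MX : Matroid α) (S : Set α) (A : α → ρ → ZMod 2) (x g : ι → α)
    (hxinj : Function.Injective x) (hginj : Function.Injective g)
    (hxS : Set.range x ⊆ S) (hdisj : Disjoint S (Set.range g))
    (hXindep : M.Indep (Set.range x))
    (hM : IsBinaryRep M S A)
    (hMX : IsBinaryRep MX (S ∪ Set.range g) (gammaCols A x g))
    (hMconn : KConnected M 4) (hcard : (6 : ℕ∞) ≤ S.encard) :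
    (∀ C : Set α, MatroidCircuit MX C → C.encard ≤ 3 → ¬ ∃ e : α, C ∩ S = {e}) ∧
      (∀ e ∈ S, ∀ i j : ι, ¬ MatroidCircuit MX {e, g i, g j}) :=
  stmt_16_general M MX S A x g hginj hxS hdisj hM hMX hMconn hcard
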